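/- Let P ≥ 1 be an integer, D = P² + 4, λ₁ = (P + √D)/2, λ₂ = (P − √D)/2, and define g(t) = (λ₁ : ℂ)^t + (λ₂ : ℂ)^t and h(t) = ((λ₁ : ℂ)^t − (λ₂ : ℂ)^t)/√D using principal complex powers. Then for every real t, g(t)² − D·h(t)² = 4 · (−1 : ℂ)^t, where (−1 : ℂ)^t = exp(iπt); in particular the map ψ₃(t) = g(t)² − D·h(t)² is representable as a helix of ratio 4 and pitch 2 (the Pell helix). -/

import Mathlib

/-!
Write `a = λ₁^t` and `b = λ₂^t`. Then `g² − D h² = (a + b)² − (a − b)² = 4ab`, and since `λ₁ > 0`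
the principal logarithm is additive on `λ₁ · λ₂`, so `ab = (λ₁ λ₂)^t = (−1)^t` by Vieta.
-/

open Complex

theorem sq_add_sub_sq_mul_sq_div {K : Type*} [Field K] {s : K} (hs : s ≠ 0) (a b : K) :
    (a + b) ^ 2 - s ^ 2 * ((a - b) / s) ^ 2 = 4 * (a * b) := by
  field_simp
  ring

theorem Complex.ofReal_mul_cpow {x : ℝ} (hx : 0 ≤ x) (z r : ℂ) :
    ((x : ℂ) * z) ^ r = (x : ℂ) ^ r * z ^ r := by
  rcases eq_or_ne r 0 with rfl | hr
  · simp
  rcases hx.eq_or_lt with rfl | hx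
  · simp [zero_cpow hr]
  rcases eq_or_ne z 0 with rfl | hz
  · simp [zero_cpow hr]
  have hx' : (x : ℂ) ≠ 0 := ofReal_ne_zero.mpr hx.ne'
  rw [cpow_def_of_ne_zero (mul_ne_zero hx' hz), log_ofReal_mul hx hz, ofReal_log hx.le,
    add_mul, exp_add, ← cpow_def_of_ne_zero hx', ← cpow_def_of_ne_zero hz]

theorem Complex.neg_one_cpow_eq_exp (z : ℂ) : (-1 : ℂ) ^ z = exp (Real.pi * z * I) := by
  rw [cpow_def_of_ne_zero (neg_ne_zero.mpr one_ne_zero), log_neg_one]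
  ring_nf

theorem pell_root_pos (P : ℝ) : 0 < (P + √(P ^ 2 + 4)) / 2 := by
  have : |P| < √(P ^ 2 + 4) := by
    rw [← Real.sqrt_sq_eq_abs]
    exact Real.sqrt_lt_sqrt (sq_nonneg P) (by linarith)
  linarith [neg_abs_le P]

theorem pell_roots_mul (P : ℝ) : (P + √(P ^ 2 + 4)) / 2 * ((P - √(P ^ 2 + 4)) / 2) = -1 := by
  have := Real.sq_sqrt (by positivity : (0 : ℝ) ≤ P ^ 2 + 4)
  linear_combination -this / 4

theorem pell_helix_general (P : ℤ) (D : ℝ) (hD : D = (P : ℝ) ^ 2 + 4)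
    (lam1 lam2 : ℝ) (hlam1 : lam1 = ((P : ℝ) + Real.sqrt D) / 2)
    (hlam2 : lam2 = ((P : ℝ) - Real.sqrt D) / 2)
    (g h : ℝ → ℂ)
    (hg : ∀ t : ℝ, g t = (lam1 : ℂ) ^ (t : ℂ) + (lam2 : ℂ) ^ (t : ℂ))
    (hh : ∀ t : ℝ, h t = ((lam1 : ℂ) ^ (t : ℂ) - (lam2 : ℂ) ^ (t : ℂ)) / (Real.sqrt D : ℂ)) :
    ∀ t : ℝ, g t ^ 2 - (D : ℂ) * h t ^ 2 = 4 * (-1 : ℂ) ^ (t : ℂ) ∧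
      (-1 : ℂ) ^ (t : ℂ) = Complex.exp (Real.pi * t * Complex.I) := by
  intro t
  subst hD hlam1 hlam2
  have hsqrt : (√((P : ℝ) ^ 2 + 4) : ℂ) ≠ 0 := ofReal_ne_zero.mpr (by positivity)
  have hprod : (((P + √((P : ℝ) ^ 2 + 4)) / 2 : ℝ) : ℂ) ^ (t : ℂ) *
      (((P - √((P : ℝ) ^ 2 + 4)) / 2 : ℝ) : ℂ) ^ (t : ℂ) = (-1 : ℂ) ^ (t : ℂ) := by
    rw [← ofReal_mul_cpow (pell_root_pos P).le, ← ofReal_mul, pell_roots_mul, ofReal_neg,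
      ofReal_one]
  refine ⟨?_, neg_one_cpow_eq_exp t⟩
  rw [hg, hh, ← hprod, ← sq_add_sub_sq_mul_sq_div hsqrt, ← ofReal_pow,
    Real.sq_sqrt (by positivity)]

/-- The Pell helix: `g(t)² − D·h(t)² = 4·(−1)^t`, where `(−1 : ℂ)^t = exp(iπt)`;
hence `ψ₃(t) = g(t)² − D·h(t)²` is representable as a helix of ratio 4 and pitch 2. -/
theorem pell_helix (P : ℤ) (hP : 1 ≤ P) (D : ℝ) (hD : D = (P : ℝ) ^ 2 + 4)
    (lam1 lam2 : ℝ) (hlam1 : lam1 = ((P : ℝ) + Real.sqrt D) / 2)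
    (hlam2 : lam2 = ((P : ℝ) - Real.sqrt D) / 2)
    (g h : ℝ → ℂ)
    (hg : ∀ t : ℝ, g t = (lam1 : ℂ) ^ (t : ℂ) + (lam2 : ℂ) ^ (t : ℂ))
    (hh : ∀ t : ℝ, h t = ((lam1 : ℂ) ^ (t : ℂ) - (lam2 : ℂ) ^ (t : ℂ)) / (Real.sqrt D : ℂ)) :
    ∀ t : ℝ, g t ^ 2 - (D : ℂ) * h t ^ 2 = 4 * (-1 : ℂ) ^ (t : ℂ) ∧
      (-1 : ℂ) ^ (t : ℂ) = Complex.exp (Real.pi * t * Complex.I) :=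
  pell_helix_general P D hD lam1 lam2 hlam1 hlam2 g h hg hh
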